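/- arXiv:1712.04761 — 5 statements merged into one kernel-verified Lean document; each statement's English description precedes it below -/
import Mathlib

section
/- Let s(ρ,e) be a C¹ function on {ρ > 0, e > 0} satisfying the first-order PDE ∂s/∂ρ(ρ,e) = -(γ-1)(e/ρ) ∂s/∂e(ρ,e) with γ > 1. Then there exists a function S of one variable such that s(ρ,e) = S((γ-1) e / ρ^{γ-1}) for all ρ > 0, e > 0. -/
/-!
The PDE says that `s` has zero derivative along the direction `(1, (γ - 1) e / ρ)`, which is
the tangent of the curve `ρ ↦ (ρ, c ρ^(γ-1))`. Hence `s` is constant on each such curve, and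
`c = e / ρ^(γ-1)` labels the curve through `(ρ, e)`; reading `s` off where the curve meets
`ρ = 1` gives the factorisation.
-/

open Set Real

theorem hasDerivAt_comp_graph_eq_zero {s : ℝ × ℝ → ℝ} {φ : ℝ → ℝ} {φ' t : ℝ}
    (hs : DifferentiableAt ℝ s (t, φ t)) (hφ : HasDerivAt φ φ' t)
    (hchar : fderiv ℝ s (t, φ t) (1, 0) = -φ' * fderiv ℝ s (t, φ t) (0, 1)) :
    HasDerivAt (fun u => s (u, φ u)) 0 t := by
  have h := hs.hasFDerivAt.comp_hasDerivAt t ((hasDerivAt_id t).prodMk hφ)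
  have hsplit : ((1 : ℝ), φ') = ((1 : ℝ), (0 : ℝ)) + φ' • ((0 : ℝ), (1 : ℝ)) := by simp
  rwa [hsplit, map_add, map_smul, hchar, smul_eq_mul, neg_mul, neg_add_cancel] at h

theorem hasDerivAt_const_mul_rpow {γ c t : ℝ} (ht : 0 < t) :
    HasDerivAt (fun u => c * u ^ (γ - 1)) ((γ - 1) * (c * t ^ (γ - 1) / t)) t := by
  have h := (hasDerivAt_rpow_const (p := γ - 1) (Or.inl ht.ne')).const_mul c
  rwa [rpow_sub_one ht.ne', mul_left_comm, ← mul_div_assoc] at h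

theorem eq_along_const_mul_rpow {γ c : ℝ} {s : ℝ × ℝ → ℝ} (hc : 0 < c)
    (hs : DifferentiableOn ℝ s (Ioi 0 ×ˢ Ioi 0))
    (hpde : ∀ ρ e : ℝ, 0 < ρ → 0 < e →
      fderiv ℝ s (ρ, e) (1, 0) = -(γ - 1) * (e / ρ) * fderiv ℝ s (ρ, e) (0, 1))
    {x y : ℝ} (hx : 0 < x) (hy : 0 < y) :
    s (x, c * x ^ (γ - 1)) = s (y, c * y ^ (γ - 1)) := by
  have hder : ∀ t ∈ Ioi (0 : ℝ), HasDerivAt (fun u => s (u, c * u ^ (γ - 1))) 0 t := by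
    intro t (ht : 0 < t)
    have he : 0 < c * t ^ (γ - 1) := mul_pos hc (rpow_pos_of_pos ht _)
    refine hasDerivAt_comp_graph_eq_zero ?_ (hasDerivAt_const_mul_rpow ht) ?_
    · exact hs.differentiableAt ((isOpen_Ioi.prod isOpen_Ioi).mem_nhds ⟨ht, he⟩)
    · rw [hpde t _ ht he, neg_mul]
  exact isOpen_Ioi.is_const_of_deriv_eq_zero isPreconnected_Ioi
    (fun t ht => (hder t ht).differentiableAt.differentiableWithinAt)
    (fun t ht => (hder t ht).deriv) hx hy

/-- a C¹ solution of `∂_ρ s = -(γ-1)(e/ρ) ∂_e s` on `{ρ>0, e>0}` factors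
through the quantity `(γ-1) e / ρ^(γ-1)`. -/
theorem entropy_factors (γ : ℝ) (hγ : 1 < γ) (s : ℝ × ℝ → ℝ)
    (hs : ContDiffOn ℝ 1 s (Set.Ioi (0 : ℝ) ×ˢ Set.Ioi (0 : ℝ)))
    (hpde : ∀ ρ e : ℝ, 0 < ρ → 0 < e →
      fderiv ℝ s (ρ, e) (1, 0) = -(γ - 1) * (e / ρ) * fderiv ℝ s (ρ, e) (0, 1)) :
    ∃ S : ℝ → ℝ, ∀ ρ e : ℝ, 0 < ρ → 0 < e →
      s (ρ, e) = S ((γ - 1) * e / ρ ^ (γ - 1)) := by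
  refine ⟨fun q => s (1, q / (γ - 1)), fun ρ e hρ he => ?_⟩
  have hργ : 0 < ρ ^ (γ - 1) := rpow_pos_of_pos hρ _
  have hγ1 : γ - 1 ≠ 0 := sub_ne_zero_of_ne hγ.ne'
  calc s (ρ, e) = s (ρ, e / ρ ^ (γ - 1) * ρ ^ (γ - 1)) := by rw [div_mul_cancel₀ _ hργ.ne']
    _ = s (1, e / ρ ^ (γ - 1) * 1 ^ (γ - 1)) :=
      eq_along_const_mul_rpow (div_pos he hργ) (hs.differentiableOn one_ne_zero) hpde hρ one_pos
    _ = s (1, (γ - 1) * e / ρ ^ (γ - 1) / (γ - 1)) := by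
      rw [one_rpow, mul_one, mul_div_assoc, mul_div_cancel_left₀ _ hγ1]
end

section
/- Let γ > 1 and let S : (0,∞) → ℝ be C² with S'(Z) > 0 and (γ-1) S'(Z) + γ S''(Z) Z < 0 for all Z > 0. Then the determinant of the Hessian of h(ρ,p) = ρ S(p/ρ^γ) equals -((γ-1) S'(Z)/ρ^{2γ}) · (γ S''(Z) Z + (γ-1) S'(Z)), where Z = p/ρ^γ, and this determinant is strictly positive. -/
/-! With `Z = p / ρ^γ` one has `∂ρ h = G(Z)` for `G z = S z - γ z S'(z)` and
`∂p h = ρ^{1-γ} S'(Z)`. Hence `∂ρρ h = G'(Z) ∂ρ Z`, `∂pρ h = G'(Z) ∂p Z` and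
`∂pp h = ρ^{1-2γ} S''(Z)`, where `G' = (1-γ) S' - γ z S''`. The determinant then simplifies to
`ρ^{-2γ} (γ-1) S'(Z) G'(Z)`, and `G' > 0` is exactly the hypothesis on `S`. -/

open Real Set Filter Topology

lemma hasDerivAt_div_rpow_const (γ q : ℝ) {r : ℝ} (hr : 0 < r) :
    HasDerivAt (fun r => q / r ^ γ) (-γ * (q / r ^ γ) / r) r := by
  have hpow : HasDerivAt (fun x : ℝ => x ^ γ) (γ * (r ^ γ / r)) r := by
    simpa [rpow_sub hr] using hasDerivAt_rpow_const (p := γ) (Or.inl hr.ne')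
  refine ((hasDerivAt_const r q).div hpow (rpow_pos_of_pos hr γ).ne').congr_deriv ?_
  field_simp
  ring

lemma HasDerivAt.comp_div_const {f : ℝ → ℝ} {f' q : ℝ} (c : ℝ)
    (hf : HasDerivAt f f' (q / c)) :
    HasDerivAt (fun q => f (q / c)) (f' / c) q := by
  simpa [Function.comp_def, div_eq_mul_inv] using hf.comp q ((hasDerivAt_id q).div_const c)

section

variable {γ : ℝ} {S : ℝ → ℝ}

lemma hasDerivAt_sub_mul_deriv {z : ℝ} (hS : DifferentiableAt ℝ S z)
    (hS' : DifferentiableAt ℝ (deriv S) z) :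
    HasDerivAt (fun z => S z - γ * z * deriv S z)
      ((1 - γ) * deriv S z - γ * z * deriv (deriv S) z) z := by
  refine (hS.hasDerivAt.sub (((hasDerivAt_id z).const_mul γ).mul hS'.hasDerivAt)).congr_deriv ?_
  simp only [id]
  ring

lemma hasDerivAt_mul_comp_div_rpow_left {q r : ℝ} (hr : 0 < r)
    (hS : DifferentiableAt ℝ S (q / r ^ γ)) :
    HasDerivAt (fun r => r * S (q / r ^ γ))
      (S (q / r ^ γ) - γ * (q / r ^ γ) * deriv S (q / r ^ γ)) r := by
  refine ((hasDerivAt_id r).mul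
    (hS.hasDerivAt.comp r (hasDerivAt_div_rpow_const γ q hr))).congr_deriv ?_
  simp only [id, Function.comp_apply]
  field_simp
  ring

lemma hasDerivAt_mul_comp_div_rpow_right {q r : ℝ} (hS : DifferentiableAt ℝ S (q / r ^ γ)) :
    HasDerivAt (fun q => r * S (q / r ^ γ)) (r * (deriv S (q / r ^ γ) / r ^ γ)) q :=
  (hS.hasDerivAt.comp_div_const _).const_mul r

variable (hS : ∀ z, 0 < z → DifferentiableAt ℝ S z)
  (hS' : ∀ z, 0 < z → DifferentiableAt ℝ (deriv S) z)
include hS hS'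

lemma deriv_deriv_mul_comp_div_rpow_left {p ρ : ℝ} (hp : 0 < p) (hρ : 0 < ρ) :
    deriv (fun r => deriv (fun r' => r' * S (p / r' ^ γ)) r) ρ =
      ((1 - γ) * deriv S (p / ρ ^ γ) - γ * (p / ρ ^ γ) * deriv (deriv S) (p / ρ ^ γ)) *
        (-γ * (p / ρ ^ γ) / ρ) := by
  have hZ : 0 < p / ρ ^ γ := div_pos hp (rpow_pos_of_pos hρ γ)
  have hfirst : (fun r => deriv (fun r' => r' * S (p / r' ^ γ)) r) =ᶠ[𝓝 ρ]
      fun r => S (p / r ^ γ) - γ * (p / r ^ γ) * deriv S (p / r ^ γ) := by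
    filter_upwards [Ioi_mem_nhds hρ] with r hr
    exact (hasDerivAt_mul_comp_div_rpow_left hr
      (hS _ (div_pos hp (rpow_pos_of_pos hr γ)))).deriv
  rw [hfirst.deriv_eq]
  exact ((hasDerivAt_sub_mul_deriv (hS _ hZ) (hS' _ hZ)).comp ρ
    (hasDerivAt_div_rpow_const γ p hρ)).deriv

lemma deriv_deriv_mul_comp_div_rpow_right {p ρ : ℝ} (hp : 0 < p) (hρ : 0 < ρ) :
    deriv (fun q => deriv (fun q' => ρ * S (q' / ρ ^ γ)) q) p =
      ρ * (deriv (deriv S) (p / ρ ^ γ) / ρ ^ γ / ρ ^ γ) := by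
  have hZ : 0 < p / ρ ^ γ := div_pos hp (rpow_pos_of_pos hρ γ)
  have hfirst : (fun q => deriv (fun q' => ρ * S (q' / ρ ^ γ)) q) =ᶠ[𝓝 p]
      fun q => ρ * (deriv S (q / ρ ^ γ) / ρ ^ γ) := by
    filter_upwards [Ioi_mem_nhds hp] with q hq
    exact (hasDerivAt_mul_comp_div_rpow_right
      (hS _ (div_pos hq (rpow_pos_of_pos hρ γ)))).deriv
  rw [hfirst.deriv_eq]
  exact ((((hS' _ hZ).hasDerivAt.comp_div_const _).div_const _).const_mul ρ).deriv

lemma deriv_deriv_mul_comp_div_rpow_right_left {p ρ : ℝ} (hp : 0 < p) (hρ : 0 < ρ) :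
    deriv (fun q => deriv (fun r => r * S (q / r ^ γ)) ρ) p =
      ((1 - γ) * deriv S (p / ρ ^ γ) - γ * (p / ρ ^ γ) * deriv (deriv S) (p / ρ ^ γ)) /
        ρ ^ γ := by
  have hZ : 0 < p / ρ ^ γ := div_pos hp (rpow_pos_of_pos hρ γ)
  have hfirst : (fun q => deriv (fun r => r * S (q / r ^ γ)) ρ) =ᶠ[𝓝 p]
      fun q => S (q / ρ ^ γ) - γ * (q / ρ ^ γ) * deriv S (q / ρ ^ γ) := by
    filter_upwards [Ioi_mem_nhds hp] with q hq
    exact (hasDerivAt_mul_comp_div_rpow_left hρ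
      (hS _ (div_pos hq (rpow_pos_of_pos hρ γ)))).deriv
  rw [hfirst.deriv_eq]
  exact ((hasDerivAt_sub_mul_deriv (hS _ hZ) (hS' _ hZ)).comp_div_const _).deriv

end

lemma hessian_det_identity {γ ρ Z a b : ℝ} (hρ : 0 < ρ) :
    ((1 - γ) * a - γ * Z * b) * (-γ * Z / ρ) * (ρ * (b / ρ ^ γ / ρ ^ γ)) -
        (((1 - γ) * a - γ * Z * b) / ρ ^ γ) ^ 2 =
      -((γ - 1) * a / ρ ^ (2 * γ)) * (γ * b * Z + (γ - 1) * a) := by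
  rw [two_mul, rpow_add hρ]
  field_simp
  ring

/-- the Hessian determinant of `h(ρ,p) = ρ S(p/ρ^γ)` equals
`-((γ-1) S'(Z)/ρ^{2γ}) (γ S''(Z) Z + (γ-1) S'(Z))` with `Z = p/ρ^γ`, and is positive. -/
theorem hessian_determinant (γ : ℝ) (hγ : 1 < γ) (S : ℝ → ℝ)
    (hS : ContDiffOn ℝ 2 S (Set.Ioi (0 : ℝ)))
    (hS' : ∀ Z : ℝ, 0 < Z → 0 < deriv S Z)
    (hcond : ∀ Z : ℝ, 0 < Z → (γ - 1) * deriv S Z + γ * deriv (deriv S) Z * Z < 0)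
    (h : ℝ → ℝ → ℝ) (hh : ∀ ρ p : ℝ, h ρ p = ρ * S (p / ρ ^ γ))
    (ρ p : ℝ) (hρ : 0 < ρ) (hp : 0 < p) :
    deriv (fun r => deriv (fun r' => h r' p) r) ρ *
          deriv (fun q => deriv (fun q' => h ρ q') q) p -
        (deriv (fun q => deriv (fun r => h r q) ρ) p) ^ 2 =
      -((γ - 1) * deriv S (p / ρ ^ γ) / ρ ^ (2 * γ)) *
        (γ * deriv (deriv S) (p / ρ ^ γ) * (p / ρ ^ γ) + (γ - 1) * deriv S (p / ρ ^ γ)) ∧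
    0 < deriv (fun r => deriv (fun r' => h r' p) r) ρ *
          deriv (fun q => deriv (fun q' => h ρ q') q) p -
        (deriv (fun q => deriv (fun r => h r q) ρ) p) ^ 2 := by
  have hdiff : ∀ z, 0 < z → DifferentiableAt ℝ S z := fun z hz =>
    (hS.differentiableOn (by norm_num)).differentiableAt (Ioi_mem_nhds hz)
  have hdiff' : ∀ z, 0 < z → DifferentiableAt ℝ (deriv S) z := fun z hz =>
    ((hS.deriv_of_isOpen (m := 1) isOpen_Ioi (by norm_num)).differentiableOn
      one_ne_zero).differentiableAt (Ioi_mem_nhds hz)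
  obtain rfl : h = fun ρ p => ρ * S (p / ρ ^ γ) := funext₂ hh
  beta_reduce
  rw [deriv_deriv_mul_comp_div_rpow_left hdiff hdiff' hp hρ,
    deriv_deriv_mul_comp_div_rpow_right hdiff hdiff' hp hρ,
    deriv_deriv_mul_comp_div_rpow_right_left hdiff hdiff' hp hρ]
  have hZ : 0 < p / ρ ^ γ := div_pos hp (rpow_pos_of_pos hρ γ)
  generalize p / ρ ^ γ = Z at hZ ⊢
  have hdet := hessian_det_identity (γ := γ) (Z := Z) (a := deriv S Z)
    (b := deriv (deriv S) Z) hρ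
  refine ⟨hdet, hdet ▸ mul_pos_of_neg_of_neg ?_ (by linarith [hcond Z hZ])⟩
  exact neg_neg_of_pos (div_pos (mul_pos (by linarith) (hS' Z hZ)) (rpow_pos_of_pos hρ _))
end

section
/- Let γ > 1 and let S : (0,∞) → ℝ be C² with S'(Z) > 0 and (γ-1) S'(Z) + γ S''(Z) Z < 0 for all Z > 0. Then the function h(ρ,p) = ρ S(p/ρ^γ) is concave on the convex set {(ρ,p) : ρ > 0, p > 0}. -/
/-!
With `q = p ^ (1/γ)` one has `ρ S(p / ρ^γ) = ρ G(q / ρ)` for `G y = S (y ^ γ)`, and the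
hypothesis on `S` says exactly that `G'' y = γ y^(γ-2) ((γ-1) S'(y^γ) + γ S''(y^γ) y^γ) < 0`.
So `G` is concave, and increasing since `S' > 0`. The perspective `(ρ, q) ↦ ρ G(q / ρ)` of a
concave function is concave, and it stays concave after substituting the concave function
`p ^ (1/γ)` for its argument `q`, in which it is increasing.
-/

open Set Real

theorem concaveOn_comp_rpow {γ : ℝ} (hγ : 0 ≤ γ) {S : ℝ → ℝ} (hS : ContDiffOn ℝ 2 S (Ioi 0))
    (hcond : ∀ Z, 0 < Z → (γ - 1) * deriv S Z + γ * deriv (deriv S) Z * Z ≤ 0) :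
    ConcaveOn ℝ (Ioi 0) (fun y => S (y ^ γ)) := by
  have hS_deriv : ∀ Z ∈ Ioi (0 : ℝ), HasDerivAt S (deriv S Z) Z := fun Z hZ =>
    (hS.differentiableOn two_ne_zero |>.differentiableAt (Ioi_mem_nhds hZ)).hasDerivAt
  have hS_deriv2 : ∀ Z ∈ Ioi (0 : ℝ), HasDerivAt (deriv S) (deriv (deriv S) Z) Z := fun Z hZ =>
    ((hS.deriv_of_isOpen isOpen_Ioi one_add_one_eq_two.le).differentiableOn one_ne_zero
      |>.differentiableAt (Ioi_mem_nhds hZ)).hasDerivAt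
  have hpow : ∀ p, ∀ y ∈ Ioi (0 : ℝ), HasDerivAt (fun y => y ^ p) (p * y ^ (p - 1)) y :=
    fun p y hy => hasDerivAt_rpow_const (Or.inl (ne_of_gt hy))
  have hpow_pos : ∀ y ∈ Ioi (0 : ℝ), y ^ γ ∈ Ioi 0 := fun y hy => rpow_pos_of_pos hy γ
  have hG' : ∀ y ∈ Ioi (0 : ℝ),
      HasDerivAt (fun y => S (y ^ γ)) (deriv S (y ^ γ) * (γ * y ^ (γ - 1))) y := fun y hy =>
    (hS_deriv _ (hpow_pos y hy)).comp y (hpow γ y hy)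
  have hG'' : ∀ y ∈ Ioi (0 : ℝ), HasDerivAt (fun y => deriv S (y ^ γ) * (γ * y ^ (γ - 1)))
      (deriv (deriv S) (y ^ γ) * (γ * y ^ (γ - 1)) * (γ * y ^ (γ - 1)) +
        deriv S (y ^ γ) * (γ * ((γ - 1) * y ^ (γ - 1 - 1)))) y := fun y hy =>
    ((hS_deriv2 _ (hpow_pos y hy)).comp y (hpow γ y hy)).mul ((hpow (γ - 1) y hy).const_mul γ)
  refine concaveOn_of_hasDerivWithinAt2_nonpos (convex_Ioi 0)
    (fun y hy => (hG' y hy).continuousAt.continuousWithinAt)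
    (fun y hy => (hG' y (interior_subset hy)).hasDerivWithinAt)
    (fun y hy => (hG'' y (interior_subset hy)).hasDerivWithinAt) ?_
  rw [interior_Ioi]
  intro y (hy : 0 < y)
  have hsq : y ^ (γ - 1) * y ^ (γ - 1) = y ^ (γ - 1 - 1) * y ^ γ := by
    rw [← rpow_add hy, ← rpow_add hy]
    ring_nf
  calc _ = γ * y ^ (γ - 1 - 1) *
        ((γ - 1) * deriv S (y ^ γ) + γ * deriv (deriv S) (y ^ γ) * y ^ γ) := by
        linear_combination γ * γ * deriv (deriv S) (y ^ γ) * hsq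
    _ ≤ 0 :=
        mul_nonpos_of_nonneg_of_nonpos (mul_nonneg hγ (rpow_nonneg hy.le _))
          (hcond _ (hpow_pos y hy))

noncomputable def perspective (G : ℝ → ℝ) (x : ℝ × ℝ) : ℝ := x.1 * G (x.2 / x.1)

lemma div_convexCombination_eq {t₁ t₂ a b : ℝ} (x₁ x₂ : ℝ) (ht₁ : 0 < t₁) (ht₂ : 0 < t₂)
    (hT : 0 < a * t₁ + b * t₂) :
    (a * x₁ + b * x₂) / (a * t₁ + b * t₂) =
      a * t₁ / (a * t₁ + b * t₂) * (x₁ / t₁) + b * t₂ / (a * t₁ + b * t₂) * (x₂ / t₂) := by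
  field_simp

theorem concaveOn_perspective {s : Set ℝ} {G : ℝ → ℝ} (hG : ConcaveOn ℝ s G) :
    ConcaveOn ℝ {x : ℝ × ℝ | 0 < x.1 ∧ x.2 / x.1 ∈ s} (perspective G) := by
  -- the ratio of a convex combination is a convex combination of the ratios, with these weights
  have weights : ∀ {t₁ t₂ a b : ℝ}, 0 < t₁ → 0 < t₂ → 0 ≤ a → 0 ≤ b → a + b = 1 →
      0 < a * t₁ + b * t₂ ∧ 0 ≤ a * t₁ / (a * t₁ + b * t₂) ∧ 0 ≤ b * t₂ / (a * t₁ + b * t₂) ∧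
        a * t₁ / (a * t₁ + b * t₂) + b * t₂ / (a * t₁ + b * t₂) = 1 := by
    intro t₁ t₂ a b ht₁ ht₂ ha hb hab
    have hT : 0 < a * t₁ + b * t₂ := convex_Ioi (0 : ℝ) ht₁ ht₂ ha hb hab
    exact ⟨hT, by positivity, by positivity, by field_simp⟩
  constructor
  · rintro ⟨t₁, x₁⟩ ⟨ht₁, hx₁⟩ ⟨t₂, x₂⟩ ⟨ht₂, hx₂⟩ a b ha hb hab
    obtain ⟨hT, hw₁, hw₂, hw⟩ := weights ht₁ ht₂ ha hb hab
    refine ⟨hT, ?_⟩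
    simp only [Prod.smul_mk, Prod.mk_add_mk, smul_eq_mul]
    rw [div_convexCombination_eq x₁ x₂ ht₁ ht₂ hT]
    exact hG.1 hx₁ hx₂ hw₁ hw₂ hw
  · rintro ⟨t₁, x₁⟩ ⟨ht₁, hx₁⟩ ⟨t₂, x₂⟩ ⟨ht₂, hx₂⟩ a b ha hb hab
    obtain ⟨hT, hw₁, hw₂, hw⟩ := weights ht₁ ht₂ ha hb hab
    simp only [perspective, Prod.smul_mk, Prod.mk_add_mk, smul_eq_mul]
    rw [div_convexCombination_eq x₁ x₂ ht₁ ht₂ hT]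
    calc a * (t₁ * G (x₁ / t₁)) + b * (t₂ * G (x₂ / t₂))
        = (a * t₁ + b * t₂) * (a * t₁ / (a * t₁ + b * t₂) * G (x₁ / t₁) +
            b * t₂ / (a * t₁ + b * t₂) * G (x₂ / t₂)) := by field_simp
      _ ≤ _ := mul_le_mul_of_nonneg_left (hG.2 hx₁ hx₂ hw₁ hw₂ hw) hT.le

lemma monotoneOn_perspective_snd {G : ℝ → ℝ} (hG : MonotoneOn G (Ioi 0)) {ρ : ℝ} (hρ : 0 < ρ) :
    MonotoneOn (fun q => perspective G (ρ, q)) (Ioi 0) := fun _ hq₁ _ hq₂ hq =>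
  mul_le_mul_of_nonneg_left
    (hG (div_pos hq₁ hρ) (div_pos hq₂ hρ) (div_le_div_of_nonneg_right hq hρ.le)) hρ.le

theorem ConcaveOn.comp_snd {s t u : Set ℝ} {P : ℝ × ℝ → ℝ} {φ : ℝ → ℝ}
    (hP : ConcaveOn ℝ (s ×ˢ t) P) (hP_mono : ∀ ρ ∈ s, MonotoneOn (fun q => P (ρ, q)) t)
    (hφ : ConcaveOn ℝ u φ) (hφt : MapsTo φ u t) :
    ConcaveOn ℝ (s ×ˢ u) (fun x => P (x.1, φ x.2)) := by
  have hmem : ∀ ⦃x⦄, x ∈ s ×ˢ u → ∀ ⦃y⦄, y ∈ s ×ˢ u → ∀ ⦃a b : ℝ⦄, 0 ≤ a → 0 ≤ b → a + b = 1 →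
      (a * x.1 + b * y.1, a * φ x.2 + b * φ y.2) ∈ s ×ˢ t := fun x hx y hy a b ha hb hab =>
    hP.1 (mk_mem_prod hx.1 (hφt hx.2)) (mk_mem_prod hy.1 (hφt hy.2)) ha hb hab
  refine ⟨fun x hx y hy a b ha hb hab => ⟨(hmem hx hy ha hb hab).1, hφ.1 hx.2 hy.2 ha hb hab⟩,
    fun x hx y hy a b ha hb hab => ?_⟩
  have hcomb := hmem hx hy ha hb hab
  calc a • P (x.1, φ x.2) + b • P (y.1, φ y.2)
      ≤ P (a * x.1 + b * y.1, a * φ x.2 + b * φ y.2) :=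
        hP.2 (mk_mem_prod hx.1 (hφt hx.2)) (mk_mem_prod hy.1 (hφt hy.2)) ha hb hab
    _ ≤ P (a * x.1 + b * y.1, φ (a * x.2 + b * y.2)) :=
        hP_mono _ hcomb.1 hcomb.2 (hφt (hφ.1 hx.2 hy.2 ha hb hab)) (hφ.2 hx.2 hy.2 ha hb hab)

/-- under `S' > 0` and `(γ-1)S' + γ S'' Z < 0`, the function
`h(ρ,p) = ρ S(p/ρ^γ)` is concave on `{ρ > 0, p > 0}`. -/
theorem h_concave (γ : ℝ) (hγ : 1 < γ) (S : ℝ → ℝ)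
    (hS : ContDiffOn ℝ 2 S (Set.Ioi (0 : ℝ)))
    (hS' : ∀ Z : ℝ, 0 < Z → 0 < deriv S Z)
    (hcond : ∀ Z : ℝ, 0 < Z → (γ - 1) * deriv S Z + γ * deriv (deriv S) Z * Z < 0) :
    ConcaveOn ℝ (Set.Ioi (0 : ℝ) ×ˢ Set.Ioi (0 : ℝ))
      (fun x : ℝ × ℝ => x.1 * S (x.2 / x.1 ^ γ)) := by
  have hγ₀ : 0 ≤ γ := by linarith
  set G : ℝ → ℝ := fun y => S (y ^ γ)
  have hG : ConcaveOn ℝ (Ioi 0) G := concaveOn_comp_rpow hγ₀ hS fun Z hZ => (hcond Z hZ).le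
  have hS_mono : StrictMonoOn S (Ioi 0) :=
    strictMonoOn_of_deriv_pos (convex_Ioi 0) hS.continuousOn (by rw [interior_Ioi]; exact hS')
  have hG_mono : MonotoneOn G (Ioi 0) := fun y hy z hz hyz =>
    hS_mono.monotoneOn (rpow_pos_of_pos hy γ) (rpow_pos_of_pos hz γ) (rpow_le_rpow hy.le hyz hγ₀)
  have hP : ConcaveOn ℝ (Ioi 0 ×ˢ Ioi 0) (perspective G) :=
    (concaveOn_perspective hG).subset (fun x hx => ⟨hx.1, mem_Ioi.2 (div_pos hx.2 hx.1)⟩)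
      ((convex_Ioi 0).prod (convex_Ioi 0))
  have hroot : ConcaveOn ℝ (Ioi 0) (fun p : ℝ => p ^ γ⁻¹) :=
    (concaveOn_rpow (inv_nonneg.2 hγ₀) (inv_le_one_of_one_le₀ hγ.le)).subset Ioi_subset_Ici_self
      (convex_Ioi 0)
  refine (hP.comp_snd (fun ρ hρ => monotoneOn_perspective_snd hG_mono hρ) hroot
    fun p hp => rpow_pos_of_pos hp _).congr fun x ⟨hρ, hp⟩ => ?_
  simp only [perspective, G]
  rw [div_rpow (rpow_nonneg hp.le _) hρ.le, rpow_inv_rpow hp.le (by linarith)]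
end

section
/- Let γ > 1, c_v = 1/(γ-1), and let e : (0,∞)² → ℝ be C¹ satisfying ∂e/∂ρ(ρ,θ) = ((γ-1)/ρ)(e(ρ,θ) − θ ∂e/∂θ(ρ,θ)). Then the function (ρ,θ) ↦ ρ e(ρ,θ)/θ^{1+c_v} depends only on Y = ρ/θ^{c_v}, i.e. there exists a function P of one variable such that ρ e(ρ,θ)/θ^{1+c_v} = P(ρ/θ^{c_v}) for all ρ, θ > 0. -/
open Real Set

/-- a C¹ solution of `∂_ρ e = ((γ-1)/ρ)(e − θ ∂_θ e)` has the form
`ρ e(ρ,θ) = θ^{1+c_v} F(ρ/θ^{c_v})` with `c_v = 1/(γ-1)`. -/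
theorem energy_structure (γ : ℝ) (hγ : 1 < γ) (e : ℝ → ℝ → ℝ)
    (he : ContDiffOn ℝ 1 (fun q : ℝ × ℝ => e q.1 q.2) (Set.Ioi (0 : ℝ) ×ˢ Set.Ioi (0 : ℝ)))
    (hpde : ∀ ρ θ : ℝ, 0 < ρ → 0 < θ →
      deriv (fun r => e r θ) ρ = ((γ - 1) / ρ) * (e ρ θ - θ * deriv (fun t => e ρ t) θ)) :
    ∃ F : ℝ → ℝ, ∀ ρ θ : ℝ, 0 < ρ → 0 < θ →
      ρ * e ρ θ = θ ^ (1 + 1 / (γ - 1)) * F (ρ / θ ^ (1 / (γ - 1))) := by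
  set c : ℝ := 1 / (γ - 1) with hc
  have hγ1 : γ - 1 ≠ 0 := by linarith
  have hcne : (γ - 1) * c = 1 := by rw [hc]; field_simp
  have hSopen : IsOpen (Set.Ioi (0:ℝ) ×ˢ Set.Ioi (0:ℝ)) := isOpen_Ioi.prod isOpen_Ioi
  set E : ℝ × ℝ → ℝ := fun q => e q.1 q.2 with hE
  -- differentiability at interior points
  have hdiff : ∀ ρ θ : ℝ, 0 < ρ → 0 < θ → HasFDerivAt E (fderiv ℝ E (ρ, θ)) (ρ, θ) := by
    intro ρ θ hρ hθ
    have hmem : (ρ, θ) ∈ Set.Ioi (0:ℝ) ×ˢ Set.Ioi (0:ℝ) := ⟨hρ, hθ⟩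
    have := (he.differentiableOn one_ne_zero).differentiableAt (hSopen.mem_nhds hmem)
    exact this.hasFDerivAt
  -- key: the derivative of t ↦ e (y * t^c) t
  have key : ∀ y t : ℝ, 0 < y → 0 < t →
      HasDerivAt (fun s : ℝ => e (y * s ^ c) s) (e (y * t ^ c) t / t) t := by
    intro y t hy ht
    set ρ : ℝ := y * t ^ c with hρdef
    have htc : (0:ℝ) < t ^ c := rpow_pos_of_pos ht c
    have hρ : 0 < ρ := mul_pos hy htc
    set L := fderiv ℝ E (ρ, t) with hL
    have hFD := hdiff ρ t hρ ht
    -- partial derivatives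
    have hpar1 : HasDerivAt (fun r => e r t) (L (1, 0)) ρ := by
      have hcurve : HasDerivAt (fun r : ℝ => (r, t)) ((1:ℝ), (0:ℝ)) ρ :=
        (hasDerivAt_id ρ).prodMk (hasDerivAt_const ρ t)
      exact hFD.comp_hasDerivAt ρ hcurve
    have hpar2 : HasDerivAt (fun s => e ρ s) (L (0, 1)) t := by
      have hcurve : HasDerivAt (fun s : ℝ => (ρ, s)) ((0:ℝ), (1:ℝ)) t :=
        (hasDerivAt_const t ρ).prodMk (hasDerivAt_id t)
      exact hFD.comp_hasDerivAt t hcurve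
    -- the PDE in terms of L
    have hpdeL : L (1, 0) = ((γ - 1) / ρ) * (e ρ t - t * L (0, 1)) := by
      have := hpde ρ t hρ ht
      rwa [hpar1.deriv, hpar2.deriv] at this
    -- curve t ↦ (y t^c, t)
    have hrpow : HasDerivAt (fun s : ℝ => y * s ^ c) (y * (c * t ^ (c - 1))) t :=
      (Real.hasDerivAt_rpow_const (Or.inl ht.ne')).const_mul y
    have hcurve : HasDerivAt (fun s : ℝ => ((y * s ^ c : ℝ), s))
        ((y * (c * t ^ (c - 1)), 1)) t := hrpow.prodMk (hasDerivAt_id t)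
    have hcomp := hFD.comp_hasDerivAt_of_eq t hcurve (by rw [hρdef])
    have hlin : L (y * (c * t ^ (c - 1)), 1)
        = (y * (c * t ^ (c - 1))) * L (1, 0) + L (0, 1) := by
      have : ((y * (c * t ^ (c - 1)) : ℝ), (1:ℝ))
          = (y * (c * t ^ (c - 1))) • ((1:ℝ), (0:ℝ)) + ((0:ℝ), (1:ℝ)) := by
        simp [Prod.ext_iff]
      rw [this, L.map_add, L.map_smul]; simp
    have habs : ∀ A B : ℝ,
        y * (c * (t ^ c / t)) * ((γ - 1) / (y * t ^ c) * (A - t * B)) + B = A / t := by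
      intro A B
      have h2 : y * (c * (t ^ c / t)) * ((γ - 1) / (y * t ^ c) * (A - t * B))
          = ((γ - 1) * c) * ((A - t * B) / t) := by
        field_simp
      rw [h2, hcne]
      field_simp
      ring
    have hval : L (y * (c * t ^ (c - 1)), 1) = e ρ t / t := by
      rw [hlin, hpdeL]
      have h1 : t ^ (c - 1) = t ^ c / t := by
        rw [Real.rpow_sub ht, Real.rpow_one]
      rw [h1, hρdef]
      exact habs _ _
    rw [hval] at hcomp
    exact hcomp
  -- the normalized function is constant on each scaling curve
  have hconst : ∀ y θ : ℝ, 0 < y → 0 < θ →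
      e (y * θ ^ c) θ / θ = e y 1 := by
    intro y θ hy hθ
    set h : ℝ → ℝ := fun t => e (y * t ^ c) t / t with hh
    have hderiv0 : ∀ t ∈ Set.Ioi (0:ℝ), HasDerivAt h 0 t := by
      intro t ht
      have ht : (0:ℝ) < t := ht
      have h1 := (key y t hy ht).div (hasDerivAt_id t) ht.ne'
      have hval2 : (e (y * t ^ c) t / t * id t - e (y * t ^ c) t * 1) / id t ^ 2 = 0 := by
        simp only [id]; field_simp; ring
      rw [hval2] at h1
      exact h1
    have hdiffOn : DifferentiableOn ℝ h (Set.Ioi (0:ℝ)) := fun t ht =>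
      ((hderiv0 t ht).differentiableAt).differentiableWithinAt
    have hfd0 : ∀ t ∈ Set.Ioi (0:ℝ), fderivWithin ℝ h (Set.Ioi (0:ℝ)) t = 0 := by
      intro t ht
      have : fderiv ℝ h t = 0 := by
        have := (hderiv0 t ht).hasFDerivAt.fderiv
        rw [this]; ext; simp
      rw [fderivWithin_of_isOpen isOpen_Ioi ht, this]
    have h0 := (convex_Ioi (0:ℝ)).is_const_of_fderivWithin_eq_zero hdiffOn hfd0 hθ
      (Set.mem_Ioi.mpr one_pos)
    simpa [hh, Real.one_rpow] using h0
  refine ⟨fun y => y * e y 1, ?_⟩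
  intro ρ θ hρ hθ
  have htc : (0:ℝ) < θ ^ c := rpow_pos_of_pos hθ c
  set y : ℝ := ρ / θ ^ c with hy
  have hy0 : 0 < y := div_pos hρ htc
  have hyρ : y * θ ^ c = ρ := by rw [hy]; exact div_mul_cancel₀ ρ htc.ne'
  have := hconst y θ hy0 hθ
  rw [hyρ] at this
  have hθsum : θ ^ (1 + c) = θ * θ ^ c := by
    rw [Real.rpow_add hθ, Real.rpow_one]
  rw [hθsum]
  have heθ : e ρ θ = θ * e y 1 := by
    rw [div_eq_iff hθ.ne'] at this
    rw [this]; ring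
  rw [heθ, ← hyρ]; ring
end

section
/- Let S : (p̄, ∞) → ℝ satisfy S(Z) ≤ C(1 + |log Z|) for all Z > p̄ ≥ 0, with C > 0 and γ > 1. Then there exist constants c, q with q > 1 such that for all ρ > 0 and all e with (γ-1)e/ρ^{γ-1} > p̄: |ρ S((γ-1)e/ρ^{γ-1})|^q ≤ c(1 + ρ^γ + ρ e). -/
/-- AM-GM type helper: `√a √b ≤ a + b`. -/
lemma rpow_half_mul_le (a b : ℝ) (ha : 0 ≤ a) (hb : 0 ≤ b) :
    a ^ (1/2 : ℝ) * b ^ (1/2 : ℝ) ≤ a + b := by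
  have h1 : a ^ (1/2 : ℝ) = Real.sqrt a := (Real.sqrt_eq_rpow a).symm
  have h2 : b ^ (1/2 : ℝ) = Real.sqrt b := (Real.sqrt_eq_rpow b).symm
  rw [h1, h2, ← Real.sqrt_mul ha]
  have : a * b ≤ (a + b) ^ 2 := by nlinarith
  calc Real.sqrt (a * b) ≤ Real.sqrt ((a + b) ^ 2) := Real.sqrt_le_sqrt this
    _ = a + b := Real.sqrt_sq (by linarith)

/-- helper: `√x ≤ 1 + x` for `x ≥ 0`. -/
lemma rpow_half_le (x : ℝ) (hx : 0 ≤ x) : x ^ (1/2 : ℝ) ≤ 1 + x := by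
  rcases le_total x 1 with h | h
  · have := Real.rpow_le_one hx h (by norm_num : (0:ℝ) ≤ 1/2)
    linarith
  · have h2 : x ^ (1/2 : ℝ) ≤ x ^ (1 : ℝ) :=
      Real.rpow_le_rpow_of_exponent_le h (by norm_num)
    rw [Real.rpow_one] at h2
    linarith

set_option maxHeartbeats 1000000 in
/-- logarithmic growth of `S` yields an `L^q`-type bound of the total
entropy `ρ S((γ-1)e/ρ^{γ-1})` by `1 + ρ^γ + ρe` for some `q > 1`. -/
theorem entropy_Lq_bound (γ pbar C : ℝ) (hγ : 1 < γ) (hpbar : 0 ≤ pbar) (hC : 0 < C)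
    (S : ℝ → ℝ)
    (hgrowth : ∀ Z : ℝ, pbar < Z → S Z ≤ C * (1 + |Real.log Z|))
    (habs : ∀ Z : ℝ, pbar < Z → |S Z| ≤ C * (1 + |Real.log Z|))
    (M : ℝ) (hnear : ∀ Z : ℝ, pbar < Z → Z ≤ pbar + 1 → |S Z| ≤ M) :
    ∃ c q : ℝ, 1 < q ∧ ∀ ρ e : ℝ, 0 < ρ → 0 < e →
      pbar < (γ - 1) * e / ρ ^ (γ - 1) →
      |ρ * S ((γ - 1) * e / ρ ^ (γ - 1))| ^ q ≤ c * (1 + ρ ^ γ + ρ * e) := by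
  set q : ℝ := (γ + 1) / 2 with hq_def
  have hq1 : 1 < q := by rw [hq_def]; linarith
  have hq0 : (0:ℝ) < q := by linarith
  have hqγ : q ≤ γ := by rw [hq_def]; linarith
  have hM0 : 0 ≤ M :=
    le_trans (abs_nonneg _) (hnear (pbar + 1/2) (by linarith) (by linarith))
  refine ⟨M ^ q + (2*C*q)^q * γ, q, hq1, ?_⟩
  intro ρ e hρ he hZp
  set Z : ℝ := (γ - 1) * e / ρ ^ (γ - 1) with hZdef
  have hZ0 : 0 < Z := lt_of_le_of_lt hpbar hZp
  have hργ : (0:ℝ) < ρ ^ γ := Real.rpow_pos_of_pos hρ γ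
  have hρe : (0:ℝ) < ρ * e := mul_pos hρ he
  have hT : (0:ℝ) < 1 + ρ ^ γ + ρ * e := by linarith
  have habsρ : |ρ * S Z| = ρ * |S Z| := by rw [abs_mul, abs_of_pos hρ]
  have hρg1 : (0:ℝ) < ρ ^ (γ - 1) := Real.rpow_pos_of_pos hρ _
  have hsplit : ρ ^ γ = ρ ^ (γ - 1) * ρ := by
    have h := Real.rpow_add_one (ne_of_gt hρ) (γ - 1)
    rw [show γ - 1 + 1 = γ from by ring] at h
    exact h
  have hkey : ρ ^ γ * Z = (γ - 1) * (ρ * e) := by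
    rw [hZdef, hsplit]; field_simp
  have hMq : (0:ℝ) ≤ M ^ q := Real.rpow_nonneg hM0 q
  have hCq : (0:ℝ) ≤ (2*C*q)^q := Real.rpow_nonneg (by positivity) q
  rcases le_or_gt Z (pbar + 1) with hcase | hcase
  · -- near case : |S Z| ≤ M
    have hS : |S Z| ≤ M := hnear Z hZp hcase
    have h1 : |ρ * S Z| ≤ ρ * M := by
      rw [habsρ]; exact mul_le_mul_of_nonneg_left hS hρ.le
    have h2 : |ρ * S Z| ^ q ≤ (ρ * M) ^ q :=
      Real.rpow_le_rpow (abs_nonneg _) h1 hq0.le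
    have h3 : (ρ * M) ^ q = ρ ^ q * M ^ q := Real.mul_rpow hρ.le hM0
    have h4 : ρ ^ q ≤ 1 + ρ ^ γ := by
      rcases le_total ρ 1 with hρ1 | hρ1
      · have := Real.rpow_le_one hρ.le hρ1 hq0.le; linarith
      · have := Real.rpow_le_rpow_of_exponent_le hρ1 hqγ; linarith
    have h5 : ρ ^ q * M ^ q ≤ (1 + ρ ^ γ) * M ^ q :=
      mul_le_mul_of_nonneg_right h4 hMq
    nlinarith [mul_nonneg (mul_nonneg hCq (by linarith : (0:ℝ) ≤ γ)) hT.le, mul_nonneg hMq hρe.le]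
  · -- far case : Z > pbar + 1 ≥ 1
    have hZ1 : (1:ℝ) < Z := by linarith
    have hlog0 : 0 ≤ Real.log Z := Real.log_nonneg hZ1.le
    set ε : ℝ := 1 / (2*q) with hεdef
    have hε : (0:ℝ) < ε := by positivity
    have hεq : ε * q = 1/2 := by rw [hεdef]; field_simp
    have hZε0 : (0:ℝ) < Z ^ ε := Real.rpow_pos_of_pos hZ0 ε
    have hZε1 : (1:ℝ) ≤ Z ^ ε := Real.one_le_rpow hZ1.le hε.le
    have hlog : ε * Real.log Z ≤ Z ^ ε - 1 := by
      have h := Real.log_le_sub_one_of_pos hZε0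
      rwa [Real.log_rpow hZ0] at h
    have h1plus : 1 + Real.log Z ≤ 2*q * Z ^ ε := by
      have hεinv : Real.log Z ≤ 2*q * (Z ^ ε - 1) := by
        have h2 : Real.log Z = (2*q) * (ε * Real.log Z) := by
          rw [hεdef]; field_simp
        rw [h2]
        exact mul_le_mul_of_nonneg_left hlog (by linarith)
      nlinarith
    have hSb : |S Z| ≤ C * (2*q * Z ^ ε) := by
      have h := habs Z hZp
      rw [abs_of_nonneg hlog0] at h
      calc |S Z| ≤ C * (1 + Real.log Z) := h
        _ ≤ C * (2*q * Z ^ ε) := mul_le_mul_of_nonneg_left h1plus hC.le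
    have h1 : |ρ * S Z| ≤ 2*C*q * (ρ * Z ^ ε) := by
      rw [habsρ]
      calc ρ * |S Z| ≤ ρ * (C * (2*q * Z ^ ε)) := mul_le_mul_of_nonneg_left hSb hρ.le
        _ = 2*C*q * (ρ * Z ^ ε) := by ring
    have h2 : |ρ * S Z| ^ q ≤ (2*C*q * (ρ * Z ^ ε)) ^ q :=
      Real.rpow_le_rpow (abs_nonneg _) h1 hq0.le
    have h3 : (2*C*q * (ρ * Z ^ ε)) ^ q = (2*C*q)^q * (ρ ^ q * Z ^ (1/2 : ℝ)) := by
      rw [Real.mul_rpow (by positivity) (by positivity),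
        Real.mul_rpow hρ.le hZε0.le, ← Real.rpow_mul hZ0.le, hεq]
    have hqsum : q = γ/2 + 1/2 := by rw [hq_def]; ring
    have hρq : ρ ^ q = ρ ^ (γ/2 : ℝ) * ρ ^ (1/2 : ℝ) := by
      rw [hqsum, Real.rpow_add hρ]
    have hγ2 : ρ ^ (γ/2 : ℝ) = (ρ ^ γ) ^ (1/2 : ℝ) := by
      rw [← Real.rpow_mul hρ.le]; ring_nf
    have hmain : ρ ^ q * Z ^ (1/2 : ℝ) ≤ 1 + ρ ^ γ + ρ ^ γ * Z := by
      rcases le_total ρ 1 with hρ1 | hρ1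
      · have hρhalf : ρ ^ (1/2 : ℝ) ≤ 1 :=
          Real.rpow_le_one hρ.le hρ1 (by norm_num)
        have hgm : (ρ ^ γ) ^ (1/2 : ℝ) * Z ^ (1/2 : ℝ) = (ρ ^ γ * Z) ^ (1/2 : ℝ) :=
          (Real.mul_rpow hργ.le hZ0.le).symm
        have hb : (ρ ^ γ * Z) ^ (1/2 : ℝ) ≤ 1 + ρ ^ γ * Z :=
          rpow_half_le _ (by positivity)
        calc ρ ^ q * Z ^ (1/2 : ℝ) = ρ ^ (1/2:ℝ) * ((ρ ^ γ) ^ (1/2:ℝ) * Z ^ (1/2:ℝ)) := by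
              rw [hρq, hγ2]; ring
          _ ≤ 1 * ((ρ ^ γ * Z) ^ (1/2 : ℝ)) := by
              rw [hgm]
              exact mul_le_mul_of_nonneg_right hρhalf (by positivity)
          _ ≤ 1 + ρ ^ γ + ρ ^ γ * Z := by rw [one_mul]; linarith
      · have hρhalf : ρ ^ (1/2 : ℝ) ≤ ρ ^ (γ/2 : ℝ) :=
          Real.rpow_le_rpow_of_exponent_le hρ1 (by linarith)
        have hgm : (ρ ^ γ) ^ (1/2 : ℝ) * Z ^ (1/2 : ℝ) = (ρ ^ γ * Z) ^ (1/2 : ℝ) :=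
          (Real.mul_rpow hργ.le hZ0.le).symm
        have hb : (ρ ^ γ * Z) ^ (1/2 : ℝ) * (ρ ^ γ) ^ (1/2 : ℝ) ≤ ρ ^ γ * Z + ρ ^ γ :=
          rpow_half_mul_le _ _ (by positivity) hργ.le
        calc ρ ^ q * Z ^ (1/2 : ℝ)
            = ρ ^ (1/2:ℝ) * ((ρ ^ γ) ^ (1/2:ℝ) * Z ^ (1/2:ℝ)) := by rw [hρq, hγ2]; ring
          _ ≤ ρ ^ (γ/2:ℝ) * ((ρ ^ γ * Z) ^ (1/2 : ℝ)) := by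
              rw [hgm]
              exact mul_le_mul_of_nonneg_right hρhalf (by positivity)
          _ = (ρ ^ γ * Z) ^ (1/2 : ℝ) * (ρ ^ γ) ^ (1/2 : ℝ) := by rw [hγ2]; ring
          _ ≤ ρ ^ γ * Z + ρ ^ γ := hb
          _ ≤ 1 + ρ ^ γ + ρ ^ γ * Z := by linarith
    have hfar : |ρ * S Z| ^ q ≤ (2*C*q)^q * (1 + ρ ^ γ + ρ ^ γ * Z) := by
      calc |ρ * S Z| ^ q ≤ (2*C*q)^q * (ρ ^ q * Z ^ (1/2 : ℝ)) := by rw [← h3]; exact h2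
        _ ≤ (2*C*q)^q * (1 + ρ ^ γ + ρ ^ γ * Z) := mul_le_mul_of_nonneg_left hmain hCq
    have hcomp : 1 + ρ ^ γ + ρ ^ γ * Z ≤ γ * (1 + ρ ^ γ + ρ * e) := by
      rw [hkey]; nlinarith
    have : |ρ * S Z| ^ q ≤ (2*C*q)^q * γ * (1 + ρ ^ γ + ρ * e) := by
      calc |ρ * S Z| ^ q ≤ (2*C*q)^q * (1 + ρ ^ γ + ρ ^ γ * Z) := hfar
        _ ≤ (2*C*q)^q * (γ * (1 + ρ ^ γ + ρ * e)) := mul_le_mul_of_nonneg_left hcomp hCq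
        _ = (2*C*q)^q * γ * (1 + ρ ^ γ + ρ * e) := by ring
    nlinarith [mul_nonneg hMq hT.le]
end
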